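/- arXiv:2111.11395 — 6 statements merged into one kernel-verified Lean document; each statement's English description precedes it below -/
import Mathlib

section
/- Let k be a field of characteristic not 2 or 3 and E : y² = (x−α)(x−β)(x−γ) an elliptic curve with α, β, γ ∈ k. For a point P = (x, y) ∈ E(k), there exists Q ∈ E(k) with 2Q = P if and only if x−α, x−β, and x−γ are all squares in k. -/
/-!
If `2Q = P` with `Q = (x₀, y₀)`, then `y₀ ≠ 0` and the doubling formula gives
`x - α = (((x₀ - α)² - (α - β)(α - γ)) / 2y₀)²`, and likewise for `β` and `γ`.
Conversely, write `x - α = s²`, `x - β = t²`, `x - γ = u²` with the signs chosen so that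
`y = stu`. The point `Q = (x + st + su + tu, (s + t)(s + u)(t + u))` lies on the curve, its
tangent has slope `s + t + u`, and `2Q = P`; distinctness of the roots makes `y(Q) ≠ 0`.
-/

open WeierstrassCurve WeierstrassCurve.Affine

namespace WeierstrassCurve.Affine

variable {k : Type*} [Field k]

def ofRoots (α β γ : k) : Affine k :=
  { a₁ := 0, a₂ := -(α + β + γ), a₃ := 0, a₄ := α * β + α * γ + β * γ, a₆ := -(α * β * γ) }

variable {α β γ x y : k}

lemma ofRoots_swap_left (α β γ : k) : ofRoots β α γ = ofRoots α β γ := by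
  ext <;> simp only [ofRoots] <;> ring

lemma ofRoots_swap_right (α β γ : k) : ofRoots α γ β = ofRoots α β γ := by
  ext <;> simp only [ofRoots] <;> ring

lemma equation_ofRoots_iff :
    (ofRoots α β γ).Equation x y ↔ y ^ 2 = (x - α) * (x - β) * (x - γ) := by
  rw [equation_iff]
  simp only [ofRoots]
  constructor <;> intro h <;> linear_combination h

lemma negY_ofRoots : (ofRoots α β γ).negY x y = -y := by
  simp [negY, ofRoots]

lemma self_ne_negY_ofRoots (h2 : (2 : k) ≠ 0) (hy : y ≠ 0) : y ≠ (ofRoots α β γ).negY x y := by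
  rw [negY_ofRoots]
  intro h
  exact mul_ne_zero h2 hy (by linear_combination h)

lemma nonsingular_ofRoots (h2 : (2 : k) ≠ 0) (hy : y ≠ 0)
    (h : y ^ 2 = (x - α) * (x - β) * (x - γ)) : (ofRoots α β γ).Nonsingular x y := by
  rw [nonsingular_iff]
  exact ⟨equation_ofRoots_iff.mpr h, .inr (self_ne_negY_ofRoots (α := α) (β := β) (γ := γ) h2 hy)⟩

lemma slope_ofRoots_self [DecidableEq k] (h2 : (2 : k) ≠ 0) (hy : y ≠ 0) :
    (ofRoots α β γ).slope x x y y
      = (3 * x ^ 2 - 2 * (α + β + γ) * x + (α * β + α * γ + β * γ)) / (2 * y) := by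
  rw [slope_of_Y_ne rfl (self_ne_negY_ofRoots h2 hy), negY_ofRoots]
  simp only [ofRoots]
  congr 1 <;> ring

lemma addX_ofRoots_double_sub [DecidableEq k] (h2 : (2 : k) ≠ 0) (hy : y ≠ 0)
    (h : y ^ 2 = (x - α) * (x - β) * (x - γ)) :
    (ofRoots α β γ).addX x x ((ofRoots α β γ).slope x x y y) - α
      = (((x - α) ^ 2 - (α - β) * (α - γ)) / (2 * y)) ^ 2 := by
  rw [slope_ofRoots_self h2 hy]
  simp only [addX, ofRoots]
  field_simp
  linear_combination (4 * (β + γ - 2 * x)) * h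

section Halving

variable [DecidableEq k] (h2 : (2 : k) ≠ 0) {x s t u x₀ y₀ : k}
  (hx₀ : x₀ = x + s * t + s * u + t * u) (hy₀ : y₀ = (s + t) * (s + u) * (t + u)) (hy : y₀ ≠ 0)
include h2 hx₀ hy₀ hy

lemma slope_ofRoots_halving :
    (ofRoots (x - s ^ 2) (x - t ^ 2) (x - u ^ 2)).slope x₀ x₀ y₀ y₀ = s + t + u := by
  rw [slope_ofRoots_self h2 hy, div_eq_iff (mul_ne_zero h2 hy), hx₀, hy₀]
  ring

lemma addX_ofRoots_halving :
    (ofRoots (x - s ^ 2) (x - t ^ 2) (x - u ^ 2)).addX x₀ x₀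
      ((ofRoots (x - s ^ 2) (x - t ^ 2) (x - u ^ 2)).slope x₀ x₀ y₀ y₀) = x := by
  rw [slope_ofRoots_halving h2 hx₀ hy₀ hy]
  simp only [addX, ofRoots, hx₀]
  ring

lemma addY_ofRoots_halving :
    (ofRoots (x - s ^ 2) (x - t ^ 2) (x - u ^ 2)).addY x₀ x₀ y₀
      ((ofRoots (x - s ^ 2) (x - t ^ 2) (x - u ^ 2)).slope x₀ x₀ y₀ y₀) = s * t * u := by
  rw [slope_ofRoots_halving h2 hx₀ hy₀ hy, addY, negY_ofRoots]
  simp only [negAddY, addX, ofRoots, hx₀, hy₀]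
  ring

end Halving

variable [DecidableEq k] (h2 : (2 : k) ≠ 0) {W : Affine k} (hW : W = ofRoots α β γ)
include h2 hW

lemma isSquare_sub_of_two_nsmul_eq {Q : W.Point} {h : W.Nonsingular x y}
    (hQ : 2 • Q = .some x y h) : IsSquare (x - α) := by
  subst hW
  rw [two_nsmul] at hQ
  rcases Q with _ | @⟨x₀, y₀, h₀⟩
  · exact absurd hQ.symm (Point.some_ne_zero h)
  have hy₀ : y₀ ≠ 0 := by
    rintro rfl
    rw [Point.add_self_of_Y_eq (by rw [negY_ofRoots, neg_zero])] at hQ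
    exact Point.some_ne_zero h hQ.symm
  rw [Point.add_self_of_Y_ne (self_ne_negY_ofRoots h2 hy₀), Point.some.injEq] at hQ
  rw [← hQ.1, addX_ofRoots_double_sub h2 hy₀ (equation_ofRoots_iff.mp h₀.1)]
  exact ⟨_, sq _⟩

lemma exists_two_nsmul_eq_of_isSquare (hαβ : α ≠ β) (hαγ : α ≠ γ) (hβγ : β ≠ γ)
    {h : W.Nonsingular x y} (hα : IsSquare (x - α)) (hβ : IsSquare (x - β))
    (hγ : IsSquare (x - γ)) : ∃ Q : W.Point, 2 • Q = .some x y h := by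
  subst hW
  obtain ⟨s, hs⟩ := hα
  obtain ⟨t, ht⟩ := hβ
  obtain ⟨u₀, hu₀⟩ := hγ
  obtain ⟨u, hu, hy⟩ : ∃ u, x - γ = u * u ∧ y = s * t * u := by
    have hy2 : y ^ 2 = (s * t * u₀) ^ 2 := by
      rw [equation_ofRoots_iff.mp h.1, hs, ht, hu₀]
      ring
    rcases sq_eq_sq_iff_eq_or_eq_neg.mp hy2 with hy | hy
    · exact ⟨u₀, hu₀, hy⟩
    · exact ⟨-u₀, by rw [hu₀, neg_mul_neg], by rw [hy]; ring⟩
  obtain rfl : α = x - s ^ 2 := by linear_combination -hs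
  obtain rfl : β = x - t ^ 2 := by linear_combination -ht
  obtain rfl : γ = x - u ^ 2 := by linear_combination -hu
  have hy₀ : (s + t) * (s + u) * (t + u) ≠ 0 := by
    refine mul_ne_zero (mul_ne_zero ?_ ?_) ?_ <;> intro hz
    exacts [hαβ (by linear_combination (t - s) * hz), hαγ (by linear_combination (u - s) * hz),
      hβγ (by linear_combination (u - t) * hz)]
  have h₀ := nonsingular_ofRoots (x := x + s * t + s * u + t * u)
    (α := x - s ^ 2) (β := x - t ^ 2) (γ := x - u ^ 2) h2 hy₀ (by ring)
  refine ⟨.some _ _ h₀, ?_⟩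
  rw [two_nsmul, Point.add_self_of_Y_ne (self_ne_negY_ofRoots h2 hy₀), Point.some.injEq]
  exact ⟨addX_ofRoots_halving h2 rfl rfl hy₀, (addY_ofRoots_halving h2 rfl rfl hy₀).trans hy.symm⟩

end WeierstrassCurve.Affine

open Classical in
/-- For an elliptic curve `E : y² = (x-α)(x-β)(x-γ)` over a field `k` of
characteristic not 2 or 3 and a point `P = (x, y) ∈ E(k)`, there exists `Q ∈ E(k)` with
`2Q = P` if and only if `x-α`, `x-β` and `x-γ` are all squares in `k`. -/
theorem stmt_1 (k : Type*) [Field k] (h2 : ringChar k ≠ 2) (h3 : ringChar k ≠ 3)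
    (α β γ : k) (hαβ : α ≠ β) (hαγ : α ≠ γ) (hβγ : β ≠ γ)
    (W : Affine k)
    (hW : W = { a₁ := 0, a₂ := -(α + β + γ), a₃ := 0,
                a₄ := α * β + α * γ + β * γ, a₆ := -(α * β * γ) })
    (x y : k) (h : W.Nonsingular x y) :
    (∃ Q : W.Point, 2 • Q = Point.some x y h) ↔
      IsSquare (x - α) ∧ IsSquare (x - β) ∧ IsSquare (x - γ) := by
  have h2' : (2 : k) ≠ 0 := Ring.two_ne_zero h2
  constructor
  · rintro ⟨Q, hQ⟩
    exact ⟨isSquare_sub_of_two_nsmul_eq h2' hW hQ,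
      isSquare_sub_of_two_nsmul_eq h2' (hW.trans (ofRoots_swap_left β α γ)) hQ,
      isSquare_sub_of_two_nsmul_eq h2'
        (hW.trans ((ofRoots_swap_right α β γ).symm.trans (ofRoots_swap_left γ α β))) hQ⟩
  · rintro ⟨hα, hβ, hγ⟩
    exact exists_two_nsmul_eq_of_isSquare h2' hW hαβ hαγ hβγ hα hβ hγ
end

section
/- Let K be a number field and E/K an elliptic curve given by y² = x(x+α)(x+β) with α, β ∈ O_K. If there exist a, b, z ∈ O_K with z ≠ 0 and a/b ∉ {−2, −1, −1/2, 0, 1} such that α = a³(a+2b)z² and β = b³(b+2a)z², then E(K) contains a point of order 3. -/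
/-!
The point `P = (a²b²z², a²b²(a+b)²z³)` lies on `y² = x(x+α)(x+β)` and is not `2`-torsion. The
tangent at `P` has slope `λ` with `λ² = α + β + 3 x(P)`, so the doubling formula gives
`x(2P) = λ² - (α + β) - 2 x(P) = x(P)`, hence `2P = -P` and `P` has order `3`.
-/

open WeierstrassCurve WeierstrassCurve.Affine NumberField

namespace WeierstrassCurve.Affine

variable {F : Type*} [Field F] [DecidableEq F] {W : Affine F}

lemma addOrderOf_some_eq_three {x y : F} {h : W.Nonsingular x y} (hy : y ≠ W.negY x y)
    (hx : W.addX x x (W.slope x x y y) = x) : addOrderOf (Point.some x y h) = 3 := by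
  have hdouble : Point.some x y h + Point.some x y h = -Point.some x y h := by
    rw [Point.add_self_of_Y_ne' hy]
    simp only [Point.neg_some, negAddY, hx, sub_self, mul_zero, zero_add]
  have hthree : 3 • Point.some x y h = 0 := by
    rw [succ_nsmul, two_nsmul, hdouble, neg_add_cancel]
  have : Fact (Nat.Prime 3) := ⟨Nat.prime_three⟩
  exact addOrderOf_eq_prime hthree (Point.some_ne_zero h)

end WeierstrassCurve.Affine

section

variable {F : Type*} [Field F]

/-- The curve `y² = x(x + α)(x + β)`. -/
def fullTwoTorsionCurve (α β : F) : Affine F :=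
  { a₁ := 0, a₂ := α + β, a₃ := 0, a₄ := α * β, a₆ := 0 }

namespace fullTwoTorsionCurve

variable {α β : F}

lemma negY_eq (x y : F) : (fullTwoTorsionCurve α β).negY x y = -y := by
  simp [negY, fullTwoTorsionCurve]

lemma Y_ne_negY {x y : F} (h2 : (2 : F) ≠ 0) (hy : y ≠ 0) :
    y ≠ (fullTwoTorsionCurve α β).negY x y := by
  rw [negY_eq]
  intro h
  exact mul_ne_zero h2 hy (by linear_combination h)

lemma slope_self [DecidableEq F] {x y : F} (h2 : (2 : F) ≠ 0) (hy : y ≠ 0) :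
    (fullTwoTorsionCurve α β).slope x x y y = (3 * x ^ 2 + 2 * (α + β) * x + α * β) / (2 * y) := by
  rw [slope_of_Y_ne rfl (Y_ne_negY h2 hy), negY_eq]
  simp only [fullTwoTorsionCurve]
  ring

lemma addX_eq (x ℓ : F) : (fullTwoTorsionCurve α β).addX x x ℓ = ℓ ^ 2 - (α + β) - 2 * x := by
  simp only [addX, fullTwoTorsionCurve]
  ring

theorem exists_addOrderOf_eq_three [DecidableEq F] {a b z : F} (h2 : (2 : F) ≠ 0) (ha : a ≠ 0)
    (hb : b ≠ 0) (hab : a + b ≠ 0) (hz : z ≠ 0) (hα : α = a ^ 3 * (a + 2 * b) * z ^ 2)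
    (hβ : β = b ^ 3 * (b + 2 * a) * z ^ 2) :
    ∃ P : (fullTwoTorsionCurve α β).Point, addOrderOf P = 3 := by
  set x := a ^ 2 * b ^ 2 * z ^ 2
  set y := a ^ 2 * b ^ 2 * (a + b) ^ 2 * z ^ 3
  have hy : y ≠ 0 := by positivity
  have hy_ne : y ≠ (fullTwoTorsionCurve α β).negY x y := Y_ne_negY h2 hy
  have heq : (fullTwoTorsionCurve α β).Equation x y := by
    rw [equation_iff]
    simp only [fullTwoTorsionCurve, x, y, hα, hβ]
    ring
  have hx : (fullTwoTorsionCurve α β).addX x x ((fullTwoTorsionCurve α β).slope x x y y) = x := by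
    rw [addX_eq, slope_self h2 hy, hα, hβ]
    field_simp
    ring
  exact ⟨_, addOrderOf_some_eq_three (h := (nonsingular_iff x y).mpr ⟨heq, .inr hy_ne⟩) hy_ne hx⟩

end fullTwoTorsionCurve

end

open Classical in
/-- Let `K` be a number field and `E/K` the elliptic curve
`y² = x(x+α)(x+β)` with `α, β ∈ 𝓞 K`. If there exist `a, b, z ∈ 𝓞 K` with `z ≠ 0` and
`a/b ∉ {-2, -1, -1/2, 0, 1}` such that `α = a³(a+2b)z²` and `β = b³(b+2a)z²`,
then `E(K)` contains a point of order 3. -/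
theorem stmt_3 (K : Type*) [Field K] [NumberField K] (a b z : 𝓞 K) (hz : z ≠ 0)
    (hab : algebraMap (𝓞 K) K a / algebraMap (𝓞 K) K b ∉
      ({-2, -1, -1/2, 0, 1} : Set K))
    (α β : 𝓞 K) (hα : α = a ^ 3 * (a + 2 * b) * z ^ 2) (hβ : β = b ^ 3 * (b + 2 * a) * z ^ 2)
    (hα0 : α ≠ 0) (hβ0 : β ≠ 0) (hαβ : α ≠ β)
    (W : Affine K)
    (hW : W = { a₁ := 0, a₂ := algebraMap (𝓞 K) K (α + β), a₃ := 0,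
                a₄ := algebraMap (𝓞 K) K (α * β), a₆ := 0 }) :
    ∃ P : W.Point, addOrderOf P = 3 := by
  set a' := algebraMap (𝓞 K) K a
  set b' := algebraMap (𝓞 K) K b
  obtain ⟨ha, hb⟩ : a' ≠ 0 ∧ b' ≠ 0 := div_ne_zero_iff.mp fun h ↦ hab (by simp [h])
  have hsum : a' + b' ≠ 0 := fun h ↦ hab (by simp [eq_neg_of_add_eq_zero_left h, hb])
  have hW' : W = fullTwoTorsionCurve (algebraMap (𝓞 K) K α) (algebraMap (𝓞 K) K β) := by
    rw [hW, map_add, map_mul]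
    rfl
  subst hW'
  exact fullTwoTorsionCurve.exists_addOrderOf_eq_three two_ne_zero ha hb hsum
    (RingOfIntegers.coe_ne_zero_iff.mpr hz)
    (by simp only [hα, map_mul, map_pow, map_add, map_ofNat]; rfl)
    (by simp only [hβ, map_mul, map_pow, map_add, map_ofNat]; rfl)
end

section
/- Let α be an element of an imaginary quadratic field K of class number 1 and let L be a quadratic extension of K containing a square root √α of α. If √α or −√α is a square in L, then α or −α is a square in K. -/
lemma stmt_7_aux {K L : Type*} [Field K] [Field L] [Algebra K L]
    (hLdeg : Module.finrank K L = 2) (α : K) (r : L) (hr : r ^ 2 = algebraMap K L α)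
    (hK : ∀ w : K, algebraMap K L w ≠ r) (htwo : (2 : K) ≠ 0)
    (z : L) (s : K) (hs : s ≠ 0) (hz : z ^ 2 = algebraMap K L s * r) :
    ∃ w : K, w ^ 2 = -α := by
  have hFD : FiniteDimensional K L :=
    FiniteDimensional.of_finrank_pos (by rw [hLdeg]; norm_num)
  have hainj := (algebraMap K L).injective
  -- 1 and r are linearly independent over K
  have haux : ∀ u v : K, algebraMap K L u + algebraMap K L v * r = 0 → u = 0 ∧ v = 0 := by
    intro u v huv
    by_cases hv : v = 0
    · subst hv
      simp only [map_zero, zero_mul, add_zero] at huv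
      exact ⟨hainj (by simpa using huv), rfl⟩
    · exfalso
      apply hK (-u / v)
      have hσv : algebraMap K L v ≠ 0 := fun h => hv (hainj (by simpa using h))
      rw [map_div₀, map_neg, div_eq_iff hσv]
      linear_combination -huv
  -- 1, z, z² are linearly dependent over K
  have hnli : ¬ LinearIndependent K ![1, z, z ^ 2] := by
    intro hli
    have := hli.fintype_card_le_finrank
    rw [hLdeg] at this
    simp at this
  obtain ⟨g, hg, i, hi⟩ := Fintype.not_linearIndependent_iff.mp hnli
  rw [Fin.sum_univ_three] at hg
  have hg' : algebraMap K L (g 0) + algebraMap K L (g 1) * z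
      + algebraMap K L (g 2) * z ^ 2 = 0 := by
    simpa [Algebra.smul_def] using hg
  rw [hz] at hg'
  by_cases hc : g 2 = 0
  · by_cases hb : g 1 = 0
    · exfalso
      rw [hb, hc] at hg'
      simp only [map_zero, zero_mul, add_zero] at hg'
      have h0 : g 0 = 0 := hainj (by simpa using hg')
      apply hi
      clear hg hg' hnli
      fin_cases i <;> assumption
    · -- σ(g1) * z = -σ(g0); squaring: σ(g1²) σ(s) r = σ(g0²), contradiction
      exfalso
      have hsq : algebraMap K L (-(g 0 ^ 2)) + algebraMap K L (g 1 ^ 2 * s) * r = 0 := by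
        have h1 : algebraMap K L (g 1) * z = -algebraMap K L (g 0) := by
          rw [hc] at hg'
          simp only [map_zero, zero_mul] at hg'
          linear_combination hg'
        have h2 : (algebraMap K L (g 1) * z) ^ 2 = algebraMap K L (g 0) ^ 2 := by
          rw [h1]; ring
        push_cast [map_neg, map_mul, map_pow]
        linear_combination h2 - (algebraMap K L (g 1)) ^ 2 * hz
      have := (haux _ _ hsq).2
      exact (mul_ne_zero (pow_ne_zero 2 hb) hs) this
  · by_cases hb : g 1 = 0
    · exfalso
      rw [hb] at hg'
      simp only [map_zero, zero_mul] at hg'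
      have h0 : g 0 = 0 ∧ g 2 * s = 0 := by
        apply haux
        rw [map_mul]
        linear_combination hg'
      exact (mul_ne_zero hc hs) h0.2
    · -- σ(g1) * z = -σ(g0) - σ(g2 s) r; square and use r² = σ α
      have hsq : algebraMap K L (g 0 ^ 2 + (g 2 * s) ^ 2 * α)
          + algebraMap K L (2 * (g 0 * (g 2 * s)) - g 1 ^ 2 * s) * r = 0 := by
        have h1 : algebraMap K L (g 1) * z
            = -algebraMap K L (g 0) - algebraMap K L (g 2 * s) * r := by
          rw [map_mul]
          linear_combination hg'
        have h2 : (algebraMap K L (g 1) * z) ^ 2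
            = (algebraMap K L (g 0) + algebraMap K L (g 2 * s) * r) ^ 2 := by
          rw [h1]; ring
        rw [map_mul] at h2
        push_cast [map_add, map_sub, map_mul, map_pow, map_ofNat]
        linear_combination -h2 + (algebraMap K L (g 1)) ^ 2 * hz
          - (algebraMap K L (g 2) * algebraMap K L s) ^ 2 * hr
      obtain ⟨h1, h2⟩ := haux _ _ hsq
      -- h1 : g0² + (g2 s)² α = 0, h2 : 2 g0 g2 s = g1² s
      have hg0 : g 0 ≠ 0 := by
        intro h0
        apply pow_ne_zero 2 hb
        have hs' : g 1 ^ 2 * s = 0 := by linear_combination -h2 + 2 * (g 2 * s) * h0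
        exact (mul_eq_zero.mp hs').resolve_right hs
      refine ⟨g 0 / (g 2 * s), ?_⟩
      have hcs : g 2 * s ≠ 0 := mul_ne_zero hc hs
      field_simp
      linear_combination h1

/-- Let `α` be an element of an imaginary quadratic field `K` of class number 1
and let `L` be a quadratic extension of `K` containing a square root `r = √α` of `α`.
If `√α` or `−√α` is a square in `L`, then `α` or `−α` is a square in `K`. -/
theorem stmt_7 (K : Type*) [Field K] [NumberField K]
    (hKdeg : Module.finrank ℚ K = 2) (him : IsEmpty (K →+* ℝ))
    (hcl : NumberField.classNumber K = 1)
    (L : Type*) [Field L] [Algebra K L] (hLdeg : Module.finrank K L = 2)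
    (α : K) (r : L) (hr : r ^ 2 = algebraMap K L α)
    (h : (∃ z : L, z ^ 2 = r) ∨ (∃ z : L, z ^ 2 = -r)) :
    (∃ w : K, w ^ 2 = α) ∨ (∃ w : K, w ^ 2 = -α) := by
  have hainj := (algebraMap K L).injective
  by_cases hK : ∃ w : K, algebraMap K L w = r
  · obtain ⟨w, hw⟩ := hK
    left
    exact ⟨w, hainj (by rw [map_pow, hw, hr])⟩
  · push_neg at hK
    have htwo : (2 : K) ≠ 0 := two_ne_zero
    right
    rcases h with ⟨z, hz⟩ | ⟨z, hz⟩
    · exact stmt_7_aux hLdeg α r hr hK htwo z 1 one_ne_zero (by simpa using hz)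
    · exact stmt_7_aux hLdeg α r hr hK htwo z (-1) (neg_ne_zero.mpr one_ne_zero)
        (by simp [hz])
end

section
/- Let L/K be a quadratic extension of fields of characteristic not 2 with Galois group generated by σ, and let E/K be an elliptic curve such that E(L) has a subgroup ⟨Q, P⟩ ≅ ℤ/2ℤ ⊕ ℤ/32ℤ with Q of order 2 and P of order 32, where Q and 4P are fixed by σ but 2P is not fixed by σ. Then a contradiction follows; that is, if Q and 4P are K-rational and ⟨Q, P⟩ ⊆ E(L), then 2P is also K-rational. -/
/-!
Write `σ P = m • Q + n • P`. As `Q` is independent of `P`, comparing `P`-coefficients turns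
`σ (4 • P) = 4 • P` into `n ≡ 1 [ZMOD 8]`, and `σ ∘ σ = id` (the automorphism group of a
quadratic extension has order at most 2) into `n ^ 2 ≡ 1 [ZMOD 32]`. Together they give
`n ≡ 1 [ZMOD 16]`, hence `σ (2 • P) = (2 * m) • Q + (2 * n) • P = 2 • P`.
-/

open WeierstrassCurve WeierstrassCurve.Affine

theorem AlgEquiv.mul_self_eq_one_of_finrank_eq_two {K L : Type*} [Field K] [Field L] [Algebra K L]
    (hL : Module.finrank K L = 2) (σ : L ≃ₐ[K] L) : σ * σ = 1 := by
  classical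
  have : FiniteDimensional K L := .of_finrank_pos (by omega)
  have hle : orderOf σ ≤ 2 := (orderOf_le_card_univ).trans (hL ▸ AlgEquiv.card_le)
  have hpos : 0 < orderOf σ := orderOf_pos σ
  rw [← pow_two]
  interval_cases h : orderOf σ
  · rw [orderOf_eq_one_iff.mp h, one_pow]
  · exact h ▸ pow_orderOf_eq_one σ

theorem WeierstrassCurve.Affine.Point.map_involutive {K L : Type*} [Field K] [Field L]
    [Algebra K L] [DecidableEq L] {W : Affine K} {σ : L ≃ₐ[K] L} (hσ : σ * σ = 1) :
    Function.Involutive (Point.map (W' := W) σ.toAlgHom) := by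
  have hid : σ.toAlgHom.comp σ.toAlgHom = AlgHom.id K L := AlgHom.ext fun x => by
    simpa using DFunLike.congr_fun hσ x
  intro P
  rw [Point.map_map, hid]
  cases P <;> rfl

theorem zsmul_eq_zero_of_zsmul_add_zsmul_eq_zero {G : Type*} [AddCommGroup G] {Q P : G}
    (hQ : addOrderOf Q = 2) (hind : Q ∉ AddSubgroup.zmultiples P) {a b : ℤ}
    (h : a • Q + b • P = 0) : b • P = 0 := by
  have hQ_smul (c : ℤ) : c • Q = 0 ↔ 2 ∣ c := by
    rw [← addOrderOf_dvd_iff_zsmul_eq_zero, hQ, Nat.cast_ofNat]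
  rcases Int.even_or_odd a with ha | ha
  · rwa [(hQ_smul a).mpr ha.two_dvd, zero_add] at h
  · have haQ : a • Q = Q := by
      have := (hQ_smul (a - 1)).mpr (ha.sub_odd odd_one).two_dvd
      rwa [sub_one_zsmul, ← sub_eq_add_neg, sub_eq_zero] at this
    refine absurd ⟨-b, ?_⟩ hind
    change (-b) • P = Q
    rw [neg_zsmul, neg_eq_iff_add_eq_zero, add_comm, ← haQ, h]

theorem Int.dvd_two_mul_sub_two_of_dvd_sq_sub_one {n : ℤ} (h4 : 32 ∣ 4 * n - 4)
    (hsq : 32 ∣ n ^ 2 - 1) : 32 ∣ 2 * n - 2 := by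
  have hdvd (c : ℤ) : 32 ∣ c ↔ (c : ZMod 32) = 0 :=
    (ZMod.intCast_zmod_eq_zero_iff_dvd c 32).symm
  rw [hdvd] at *
  push_cast at *
  generalize (n : ZMod 32) = x at *
  revert x
  decide

theorem AddMonoidHom.map_two_nsmul_eq_of_map_four_nsmul_eq {G : Type*} [AddCommGroup G]
    (f : G →+ G) {Q P : G} (hQ : addOrderOf Q = 2) (hP : addOrderOf P = 32)
    (hind : Q ∉ AddSubgroup.zmultiples P) (hfP : f P ∈ AddSubgroup.closure {Q, P})
    (hfQ : f Q = Q) (hffP : f (f P) = P) (hf4P : f (4 • P) = 4 • P) :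
    f (2 • P) = 2 • P := by
  obtain ⟨m, n, hmn⟩ := AddSubgroup.mem_closure_pair.mp hfP
  have hP_smul (b : ℤ) : b • P = 0 ↔ 32 ∣ b := by
    rw [← addOrderOf_dvd_iff_zsmul_eq_zero, hP, Nat.cast_ofNat]
  have coeff_dvd (a b : ℤ) (h : a • Q + b • P = 0) : 32 ∣ b :=
    (hP_smul b).mp (zsmul_eq_zero_of_zsmul_add_zsmul_eq_zero hQ hind h)
  have h4 : 32 ∣ 4 * n - 4 := coeff_dvd (4 * m) _ <| by
    rw [← sub_eq_zero.mpr hf4P, map_nsmul, ← hmn]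
    module
  have hsq : 32 ∣ n ^ 2 - 1 := coeff_dvd (m + n * m) _ <| by
    rw [← sub_eq_zero.mpr hffP, ← hmn, map_add, map_zsmul, map_zsmul, hfQ, ← hmn]
    module
  have h2 : (2 * n - 2) • P = 0 :=
    (hP_smul _).mpr (Int.dvd_two_mul_sub_two_of_dvd_sq_sub_one h4 hsq)
  have h2Q : (2 : ℤ) • Q = 0 := by
    rw [← addOrderOf_dvd_iff_zsmul_eq_zero, hQ, Nat.cast_ofNat]
  rw [← sub_eq_zero, map_nsmul, ← hmn]
  calc 2 • (m • Q + n • P) - 2 • P = m • (2 : ℤ) • Q + (2 * n - 2) • P := by module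
    _ = 0 := by rw [h2Q, h2, smul_zero, add_zero]

open Classical in
theorem stmt_8_general (K : Type*) [Field K]
    (L : Type*) [Field L] [Algebra K L] (hLdeg : Module.finrank K L = 2)
    (σ : L ≃ₐ[K] L)
    (W : Affine K)
    (Q P : (W.baseChange L).Point) (hQ : addOrderOf Q = 2) (hP : addOrderOf P = 32)
    (hind : Q ∉ AddSubgroup.zmultiples P)
    (hσP : Point.map (W' := W) σ.toAlgHom P ∈ AddSubgroup.closure ({Q, P} : Set (W.baseChange L).Point))
    (hQfix : Point.map (W' := W) σ.toAlgHom Q = Q)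
    (h4P : Point.map (W' := W) σ.toAlgHom (4 • P) = 4 • P) :
    Point.map (W' := W) σ.toAlgHom (2 • P) = 2 • P :=
  (Point.map σ.toAlgHom).map_two_nsmul_eq_of_map_four_nsmul_eq hQ hP hind hσP hQfix
    (Point.map_involutive (σ.mul_self_eq_one_of_finrank_eq_two hLdeg) P) h4P

open Classical in
/-- Let `L/K` be a quadratic extension of fields of characteristic not 2 with
Galois group generated by `σ`, and let `E/K` be an elliptic curve such that `E(L)` has a
subgroup `⟨Q, P⟩ ≅ ℤ/2ℤ ⊕ ℤ/32ℤ` with `Q` of order 2 and `P` of order 32, where `Q` and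
`4P` are fixed by `σ`. Then `2P` is also fixed by `σ`, i.e. `2P` is `K`-rational. -/
theorem stmt_8 (K : Type*) [Field K] (hchar : ringChar K ≠ 2)
    (L : Type*) [Field L] [Algebra K L] (hLdeg : Module.finrank K L = 2)
    (σ : L ≃ₐ[K] L) (hσ : σ ≠ AlgEquiv.refl)
    (W : Affine K) (hΔ : W.Δ ≠ 0)
    (Q P : (W.baseChange L).Point) (hQ : addOrderOf Q = 2) (hP : addOrderOf P = 32)
    (hind : Q ∉ AddSubgroup.zmultiples P)
    (hσP : Point.map (W' := W) σ.toAlgHom P ∈ AddSubgroup.closure ({Q, P} : Set (W.baseChange L).Point))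
    (hQfix : Point.map (W' := W) σ.toAlgHom Q = Q)
    (h4P : Point.map (W' := W) σ.toAlgHom (4 • P) = 4 • P) :
    Point.map (W' := W) σ.toAlgHom (2 • P) = 2 • P :=
  stmt_8_general K L hLdeg σ W Q P hQ hP hind hσP hQfix h4P
end

section
/- The elliptic curve E₁ : y² = x³ + 4x over ℚ has Mordell–Weil group isomorphic to ℤ/4ℤ, with nonzero points exactly (0,0) and (2, ±4). -/
/-!
A rational point of `E₁` has `x = a / d²` and `y = c / d³` with `a, d` coprime and
`c² = a (a² + 4 d⁴)`. Splitting by the power of `2` dividing `a` and using that coprime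
factors of a square are squares, every solution other than `a = 0` and `a = 2, d = ±1`
produces a nontrivial solution of `x⁴ - y⁴ = z²` (in each case through an identity such as
`(2uv)⁴ + (v⁴ - 4u⁴)² = (v⁴ + 4u⁴)²`), and Fermat's infinite descent shows there is none.
So the affine points are `(0, 0)` and `(2, ±4)`; since `(2, 4)` doubles to `(0, 0)`, which is
`2`-torsion, and `(2, -4) = -(2, 4)`, the point `(2, 4)` generates a group of order `4`.
-/

open WeierstrassCurve WeierstrassCurve.Affine

/-- The elliptic curve `E₁ : y² = x³ + 4x` over `ℚ`. -/
def E₁ : Affine ℚ := { a₁ := 0, a₂ := 0, a₃ := 0, a₄ := 4, a₆ := 0 }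

namespace Int

theorem exists_eq_pow_of_mul_eq_pow_of_isCoprime {a b c : ℤ} {k : ℕ} (hk : Even k) (ha : 0 ≤ a)
    (hab : IsCoprime a b) (h : a * b = c ^ k) : ∃ d, a = d ^ k := by
  obtain ⟨d, hd⟩ := exists_associated_pow_of_mul_eq_pow' hab h
  refine ⟨d, ?_⟩
  rcases Int.associated_iff.mp hd with hd | hd
  · exact hd.symm
  · have := hk.pow_nonneg d
    omega

end Int

/-- Nontrivial solutions of `x⁴ - y⁴ = z²`; that there are none is Fermat's right triangle
theorem. -/
def FermatRightTriangle (x y z : ℤ) : Prop :=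
  y ≠ 0 ∧ z ≠ 0 ∧ y ^ 4 + z ^ 2 = x ^ 4

theorem exists_fourth_pow_add_sq_of_fourth_pow_add_four_mul_eq_sq {u v b : ℤ} (hu : u ≠ 0)
    (hvu : IsCoprime v u) (hb : 0 ≤ b) (h : v ^ 4 + 4 * u ^ 4 = b ^ 2) :
    ∃ S T, S ≠ 0 ∧ S ^ 4 + v ^ 2 = T ^ 4 ∧ 2 * T ^ 4 = b + v ^ 2 := by
  -- `(b - v²) (b + v²) = 4 u⁴`, and the halves `X`, `X + v²` of the two factors are coprime.
  obtain ⟨X, hX⟩ : Even (b - v ^ 2) := by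
    have : Even (b ^ 2 - (v ^ 2) ^ 2) := ⟨2 * u ^ 4, by linear_combination -h⟩
    simpa [Int.even_sub, Int.even_pow] using this
  obtain rfl : b = X + X + v ^ 2 := by linarith
  have hprod : X * (X + v ^ 2) = u ^ 4 :=
    mul_left_cancel₀ four_ne_zero (by linear_combination -h)
  have hX0 : 0 < X := by
    have : 0 < u ^ 4 := by positivity
    nlinarith
  have hXv : IsCoprime X (X + v ^ 2) := by
    have : IsCoprime X v := (hvu.symm.pow_left (m := 4)).of_isCoprime_of_dvd_left ⟨_, hprod.symm⟩
    simpa [add_comm] using this.pow_right.add_mul_left_right 1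
  obtain ⟨S, hS⟩ := Int.exists_eq_pow_of_mul_eq_pow_of_isCoprime (by decide) hX0.le hXv hprod
  obtain ⟨T, hT⟩ := Int.exists_eq_pow_of_mul_eq_pow_of_isCoprime (by decide) (by positivity)
    hXv.symm ((mul_comm _ _).trans hprod)
  refine ⟨S, T, ?_, by rw [← hS, ← hT], by rw [← hT]; ring⟩
  rintro rfl
  simp [hS] at hX0

theorem exists_fermatRightTriangle_of_sq_eq_two_mul {m n x y : ℤ} (hm : 0 < m) (hn : 0 < n)
    (hmn : IsCoprime m n) (hm2 : Even m) (hy : y ^ 2 = 2 * m * n) (hx : x ^ 2 = m ^ 2 + n ^ 2) :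
    ∃ x' y' z', FermatRightTriangle x' y' z' ∧ x' ^ 2 < x ^ 2 := by
  obtain ⟨k, rfl⟩ := hm2
  obtain ⟨w, rfl⟩ : Even y := (Int.even_pow.mp ⟨k * n + k * n, by rw [hy]; ring⟩).1
  have hkn : k * n = w ^ 2 := mul_left_cancel₀ four_ne_zero (by linear_combination -hy)
  rw [← two_mul] at hmn
  obtain ⟨u, rfl⟩ := Int.exists_eq_pow_of_mul_eq_pow_of_isCoprime even_two (by omega)
    hmn.of_mul_left_right hkn
  obtain ⟨v, rfl⟩ := Int.exists_eq_pow_of_mul_eq_pow_of_isCoprime even_two hn.le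
    hmn.of_mul_left_right.symm ((mul_comm _ _).trans hkn)
  have hu : u ≠ 0 := by rintro rfl; simp at hm
  have hv : v ≠ 0 := by rintro rfl; simp at hn
  obtain ⟨S, T, hS, hST, hT⟩ := exists_fourth_pow_add_sq_of_fourth_pow_add_four_mul_eq_sq hu
    ((IsCoprime.pow_iff two_pos two_pos).mp hmn.of_mul_left_right).symm (abs_nonneg x)
    (by rw [sq_abs, hx]; ring)
  refine ⟨T, S, v, ⟨hS, hv, by linear_combination hST⟩, ?_⟩
  have hu4 : 0 < u ^ 4 := by positivity
  have hvx : v ^ 2 < |x| := by nlinarith [sq_abs x, abs_nonneg x, sq_nonneg v]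
  have hTx : T ^ 4 < |x| := by linarith
  nlinarith [sq_abs x, abs_nonneg x, sq_nonneg (T ^ 2 - 1)]

theorem FermatRightTriangle.exists_lt_of_isCoprime {x y z : ℤ} (h : FermatRightTriangle x y z)
    (hyx : IsCoprime y x) : ∃ x' y' z', FermatRightTriangle x' y' z' ∧ x' ^ 2 < x ^ 2 := by
  obtain ⟨hy, hz, h⟩ := h
  have hx : 0 < x ^ 2 := by
    have : 0 < x ^ 4 := by rw [← h]; positivity
    nlinarith
  have htri : PythagoreanTriple (y ^ 2) z (x ^ 2) := by
    unfold PythagoreanTriple; linear_combination h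
  have hyz : IsCoprime (y ^ 2) z := by
    have : IsCoprime (y ^ 4) (z ^ 2 + y ^ 4 * 1) := by
      rw [mul_one, add_comm, h]; exact hyx.pow
    rw [← IsCoprime.pow_iff (m := 2) two_pos two_pos, ← pow_mul]
    exact this.of_add_mul_left_right
  rcases Int.even_or_odd y with hye | hyo
  · have hzo : Odd z := by
      rw [← Int.not_even_iff_odd]
      intro hze
      exact Int.prime_two.not_isUnit <| hyz.isUnit_of_dvd'
        (hye.pow_of_ne_zero two_ne_zero).two_dvd hze.two_dvd
    obtain ⟨m, n, -, hy', hx', hmn, hpar, hm⟩ := htri.symm.coprime_classification'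
      (Int.isCoprime_iff_gcd_eq_one.mp hyz.symm) (Int.odd_iff.mp hzo) hx
    have hmn0 : 0 < m * n := by nlinarith [pow_pos (abs_pos.mpr hy) 2, sq_abs y]
    have hm0 : 0 < m := lt_of_le_of_ne hm (by rintro rfl; simp at hmn0)
    have hn0 : 0 < n := pos_of_mul_pos_right hmn0 hm
    rw [← Int.isCoprime_iff_gcd_eq_one] at hmn
    rcases hpar with ⟨hm2, -⟩ | ⟨-, hn2⟩
    · exact exists_fermatRightTriangle_of_sq_eq_two_mul hm0 hn0 hmn (Int.even_iff.mpr hm2)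
        hy' hx'
    · exact exists_fermatRightTriangle_of_sq_eq_two_mul (y := y) hn0 hm0 hmn.symm
        (Int.even_iff.mpr hn2) (by linear_combination hy') (by linear_combination hx')
  · obtain ⟨m, n, hy', hz', hx', -, -, -⟩ := htri.coprime_classification'
      (Int.isCoprime_iff_gcd_eq_one.mp hyz) (Int.odd_iff.mp hyo.pow) hx
    have hn : n ≠ 0 := by rintro rfl; simp [hz'] at hz
    refine ⟨m, n, x * y, ⟨hn, mul_ne_zero (by rintro rfl; simp at hx) hy, ?_⟩, ?_⟩
    · linear_combination x ^ 2 * hy' + (m ^ 2 - n ^ 2) * hx'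
    · have : 0 < n ^ 2 := by positivity
      linarith

theorem FermatRightTriangle.exists_isCoprime {x y z : ℤ} (h : FermatRightTriangle x y z) :
    ∃ x' y' z', FermatRightTriangle x' y' z' ∧ IsCoprime y' x' ∧ x' ^ 2 ≤ x ^ 2 := by
  obtain ⟨hy, hz, h⟩ := h
  obtain ⟨g, y', x', hg, hyx, rfl, rfl⟩ := Int.exists_gcd_one' (Int.gcd_pos_of_ne_zero_left x hy)
  obtain ⟨z', rfl⟩ : (g : ℤ) ^ 2 ∣ z := by
    rw [← Int.pow_dvd_pow_iff two_ne_zero]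
    exact ⟨x' ^ 4 - y' ^ 4, by linear_combination h⟩
  refine ⟨x', y', z', ⟨?_, ?_, ?_⟩, Int.isCoprime_iff_gcd_eq_one.mpr hyx, ?_⟩
  · rintro rfl; simp at hy
  · rintro rfl; simp at hz
  · exact mul_left_cancel₀ (a := (g : ℤ) ^ 4) (by positivity) (by linear_combination h)
  · have hg1 : (1 : ℤ) ≤ g ^ 2 := one_le_pow₀ (by exact_mod_cast hg)
    calc x' ^ 2 = x' ^ 2 * 1 := (mul_one _).symm
      _ ≤ x' ^ 2 * g ^ 2 := by gcongr
      _ = (x' * g) ^ 2 := (mul_pow ..).symm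

theorem not_fermatRightTriangle (x y z : ℤ) : ¬FermatRightTriangle x y z := by
  induction hN : x.natAbs using Nat.strong_induction_on generalizing x y z with
  | _ N ih =>
  intro h
  obtain ⟨x₁, y₁, z₁, h₁, hco, hle⟩ := h.exists_isCoprime
  obtain ⟨x₂, y₂, z₂, h₂, hlt⟩ := h₁.exists_lt_of_isCoprime hco
  exact ih _ (hN ▸ Int.natAbs_lt_iff_sq_lt.mpr (hlt.trans_le hle)) x₂ y₂ z₂ rfl h₂

theorem fourth_pow_add_four_mul_fourth_pow_ne_sq {u v b : ℤ} (hu : u ≠ 0) (hv : Odd v) :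
    v ^ 4 + 4 * u ^ 4 ≠ b ^ 2 := by
  intro h
  have hv0 : v ≠ 0 := by rintro rfl; simp at hv
  have hodd : Odd (v ^ 4 - 4 * u ^ 4) := hv.pow.sub_even ⟨2 * u ^ 4, by ring⟩
  refine not_fermatRightTriangle b (2 * u * v) (v ^ 4 - 4 * u ^ 4)
    ⟨by simp [hu, hv0], fun h0 ↦ by simp [h0] at hodd, ?_⟩
  linear_combination (v ^ 4 + 4 * u ^ 4 + b ^ 2) * h

theorem fourth_pow_eq_of_add_eq_two_mul_sq {u d w : ℤ} (hu : u ≠ 0) (hd : d ≠ 0)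
    (h : u ^ 4 + d ^ 4 = 2 * w ^ 2) : u ^ 4 = d ^ 4 := by
  by_contra hne
  refine not_fermatRightTriangle w (u * d) (w ^ 2 - d ^ 4)
    ⟨mul_ne_zero hu hd, fun h0 ↦ hne (by linear_combination h + 2 * h0), ?_⟩
  linear_combination (d ^ 4) * h

section SqEqMul

variable {a d c : ℤ}

theorem sq_ne_mul_of_odd (hd : d ≠ 0) (had : IsCoprime a d) (ha0 : 0 ≤ a) (ha : Odd a) :
    c ^ 2 ≠ a * (a ^ 2 + 4 * d ^ 4) := by
  intro h
  have hcop : IsCoprime a (a ^ 2 + 4 * d ^ 4) := by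
    have := (((Int.isCoprime_two_right.mpr ha).pow_right (n := 2)).mul_right
      (had.pow_right (n := 4))).add_mul_left_right a
    rwa [show 2 ^ 2 * d ^ 4 + a * a = a ^ 2 + 4 * d ^ 4 by ring] at this
  obtain ⟨g, rfl⟩ := Int.exists_eq_pow_of_mul_eq_pow_of_isCoprime even_two ha0 hcop h.symm
  obtain ⟨b, hb⟩ := Int.exists_eq_pow_of_mul_eq_pow_of_isCoprime even_two (by positivity)
    hcop.symm ((mul_comm _ _).trans h.symm)
  have hg : Odd g := (Int.odd_pow.mp ha).resolve_right two_ne_zero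
  exact fourth_pow_add_four_mul_fourth_pow_ne_sq hd hg (by rw [← hb]; ring)

theorem sq_ne_mul_of_four_dvd (hd : d ≠ 0) (had : IsCoprime a d) (ha0 : 0 < a) (ha : 4 ∣ a) :
    c ^ 2 ≠ a * (a ^ 2 + 4 * d ^ 4) := by
  intro h
  obtain ⟨n, rfl⟩ := ha
  obtain ⟨e, rfl⟩ : 4 ∣ c :=
    (Int.pow_dvd_pow_iff two_ne_zero).mp ⟨n * (4 * n ^ 2 + d ^ 4), by linear_combination h⟩
  have he : n * (4 * n ^ 2 + d ^ 4) = e ^ 2 :=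
    mul_left_cancel₀ (a := (16 : ℤ)) (by norm_num) (by linear_combination -h)
  have hcop : IsCoprime n (4 * n ^ 2 + d ^ 4) := by
    have := had.of_mul_left_right.pow_right (n := 4) |>.add_mul_left_right (4 * n)
    rwa [show d ^ 4 + n * (4 * n) = 4 * n ^ 2 + d ^ 4 by ring] at this
  obtain ⟨u, rfl⟩ := Int.exists_eq_pow_of_mul_eq_pow_of_isCoprime even_two (by omega) hcop he
  obtain ⟨b, hb⟩ := Int.exists_eq_pow_of_mul_eq_pow_of_isCoprime even_two (by positivity)
    hcop.symm ((mul_comm _ _).trans he)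
  have hdodd : Odd d := Int.isCoprime_two_left.mp
    (by rw [show (4 : ℤ) = 2 * 2 by rfl, mul_assoc] at had; exact had.of_mul_left_left)
  exact fourth_pow_add_four_mul_fourth_pow_ne_sq (u := u) (fun hu ↦ by simp [hu] at ha0) hdodd
    (by rw [← hb]; ring)

theorem eq_one_of_sq_eq_two_mul {m : ℤ} (hd : d ≠ 0) (hmd : IsCoprime (2 * m) d) (hm0 : 0 < m)
    (hm : Odd m) (h : c ^ 2 = 2 * m * ((2 * m) ^ 2 + 4 * d ^ 4)) : m = 1 ∧ d ^ 2 = 1 := by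
  have hdodd : Odd d := Int.isCoprime_two_left.mp hmd.of_mul_left_left
  obtain ⟨e, he⟩ : Even (m ^ 2 + d ^ 4) := hm.pow.add_odd hdodd.pow
  obtain ⟨f, rfl⟩ : 4 ∣ c :=
    (Int.pow_dvd_pow_iff two_ne_zero).mp ⟨m * e, by linear_combination h + 8 * m * he⟩
  have hf : m * e = f ^ 2 :=
    mul_left_cancel₀ (a := (16 : ℤ)) (by norm_num) (by linear_combination -h - 8 * m * he)
  have hcop : IsCoprime m e := by
    have := hmd.of_mul_left_right.pow_right (n := 4) |>.add_mul_left_right m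
    rw [show d ^ 4 + m * m = 2 * e by linear_combination he] at this
    exact this.of_mul_right_right
  obtain ⟨u, rfl⟩ := Int.exists_eq_pow_of_mul_eq_pow_of_isCoprime even_two hm0.le hcop hf
  obtain ⟨w, rfl⟩ := Int.exists_eq_pow_of_mul_eq_pow_of_isCoprime even_two
    (by nlinarith [sq_nonneg (u ^ 2), sq_nonneg (d ^ 2)]) hcop.symm ((mul_comm _ _).trans hf)
  have hu : u ≠ 0 := by rintro rfl; simp at hm0
  have hud4 : u ^ 4 = d ^ 4 :=
    fourth_pow_eq_of_add_eq_two_mul_sq (w := w) hu hd (by linear_combination he)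
  have hud : u ^ 2 = d ^ 2 := (pow_left_inj₀ (sq_nonneg u) (sq_nonneg d) two_ne_zero).mp
    (by linear_combination hud4)
  rw [hud] at hmd ⊢
  have hdd : IsCoprime d d := (IsCoprime.pow_left_iff two_pos).mp hmd.of_mul_left_right
  have hd1 : d ^ 2 = 1 := Int.isUnit_sq (isCoprime_self.mp hdd)
  exact ⟨hd1, hd1⟩

theorem eq_zero_or_eq_two_of_sq_eq_mul (hd : d ≠ 0) (had : IsCoprime a d)
    (h : c ^ 2 = a * (a ^ 2 + 4 * d ^ 4)) : a = 0 ∨ a = 2 ∧ d ^ 2 = 1 := by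
  rcases eq_or_ne a 0 with ha | ha
  · exact .inl ha
  have ha0 : 0 < a := by
    have : 0 < a ^ 2 + 4 * d ^ 4 := by positivity
    exact (nonneg_of_mul_nonneg_left (h ▸ sq_nonneg c) this).lt_of_ne' ha
  right
  rcases Int.even_or_odd a with hae | hao
  · obtain ⟨m, rfl⟩ := hae.two_dvd
    rcases Int.even_or_odd m with hme | hmo
    · exact absurd h (sq_ne_mul_of_four_dvd hd had ha0 (mul_dvd_mul_left 2 hme.two_dvd))
    · obtain ⟨rfl, hd1⟩ := eq_one_of_sq_eq_two_mul hd had (by omega) hmo h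
      exact ⟨rfl, hd1⟩
  · exact absurd h (sq_ne_mul_of_odd hd had ha0.le hao)

end SqEqMul

theorem Rat.eq_zero_or_eq_two_of_sq_eq_cube_add_four_mul {x y : ℚ} (h : y ^ 2 = x ^ 3 + 4 * x) :
    x = 0 ∨ x = 2 := by
  have hq : (0 : ℤ) < x.den := by exact_mod_cast x.pos
  have hpq : IsCoprime x.num x.den := Int.isCoprime_iff_gcd_eq_one.mpr x.reduced
  have hcop : IsCoprime (x.den : ℤ) (x.num * (x.num ^ 2 + 4 * x.den ^ 2)) := by
    refine hpq.symm.mul_right ?_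
    have := hpq.symm.pow_right (n := 2) |>.add_mul_left_right (4 * x.den)
    rwa [show x.num ^ 2 + x.den * (4 * x.den) = x.num ^ 2 + 4 * x.den ^ 2 by ring] at this
  obtain ⟨r, hr⟩ : IsSquare ((x.den : ℤ) * (x.num * (x.num ^ 2 + 4 * x.den ^ 2))) := by
    rw [← Rat.isSquare_intCast_iff]
    refine ⟨y * x.den ^ 2, ?_⟩
    push_cast
    rw [← Rat.mul_den_eq_num]
    linear_combination -(x.den : ℚ) ^ 4 * h
  rw [← sq] at hr
  obtain ⟨d, hd⟩ := Int.exists_eq_pow_of_mul_eq_pow_of_isCoprime even_two hq.le hcop hr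
  obtain ⟨c, hc⟩ := Int.exists_eq_pow_of_mul_eq_pow_of_isCoprime even_two
    (nonneg_of_mul_nonneg_right (hr ▸ sq_nonneg r) hq) hcop.symm ((mul_comm _ _).trans hr)
  rw [hd] at hpq hc
  rcases eq_zero_or_eq_two_of_sq_eq_mul (c := c) (fun h0 ↦ by simp [h0] at hd)
    ((IsCoprime.pow_right_iff two_pos).mp hpq) (by rw [← hc]; ring) with hp | ⟨hp, hd1⟩
  · exact .inl (Rat.num_eq_zero.mp hp)
  · right
    rw [← (Rat.den_eq_one_iff x).mp (by exact_mod_cast hd.trans hd1), hp]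
    norm_num

namespace E₁

instance : E₁.IsElliptic := ⟨by norm_num [E₁, WeierstrassCurve.Δ, b₂, b₄, b₆, b₈]⟩

theorem nonsingular_iff {x y : ℚ} : E₁.Nonsingular x y ↔ y ^ 2 = x ^ 3 + 4 * x := by
  rw [← equation_iff_nonsingular, equation_iff]
  simp [E₁]

theorem point_cases (P : E₁.Point) :
    P = 0 ∨ ∃ (x y : ℚ) (h : E₁.Nonsingular x y), P = Point.some x y h ∧
      ((x, y) = (0, 0) ∨ (x, y) = (2, 4) ∨ (x, y) = (2, -4)) := by
  rcases P with _ | ⟨x, y, h⟩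
  · exact .inl rfl
  refine .inr ⟨x, y, h, rfl, ?_⟩
  have hxy := nonsingular_iff.mp h
  rcases Rat.eq_zero_or_eq_two_of_sq_eq_cube_add_four_mul hxy with rfl | rfl
  · left
    simpa using hxy
  · right
    have : y ^ 2 = 4 ^ 2 := by linear_combination hxy
    simpa using sq_eq_sq_iff_eq_or_eq_neg.mp this

def P : E₁.Point := .some 2 4 (nonsingular_iff.mpr (by norm_num))

def T : E₁.Point := .some 0 0 (nonsingular_iff.mpr (by norm_num))

theorem P_add_P : P + P = T := by
  rw [P, Point.add_self_of_Y_ne (by norm_num [negY, E₁]), T, Point.some.injEq]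
  norm_num [addY, negAddY, addX, Affine.slope, negY, E₁]

theorem T_add_T : T + T = 0 :=
  Point.add_self_of_Y_eq (by simp [negY, E₁])

theorem neg_P : -P = .some 2 (-4) (nonsingular_iff.mpr (by norm_num)) := by
  rw [P, Point.neg_some, Point.some.injEq]
  norm_num [negY, E₁]

theorem addOrderOf_P : addOrderOf P = 4 := by
  have := Fact.mk Nat.prime_two
  refine addOrderOf_eq_prime_pow (p := 2) (n := 1) ?_ ?_
  · rw [pow_one, two_nsmul, P_add_P]
    exact Point.some_ne_zero _
  · rw [show 2 ^ (1 + 1) = 2 * 2 from rfl, mul_nsmul, two_nsmul P, P_add_P, two_nsmul, T_add_T]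

theorem mem_zmultiples_P (Q : E₁.Point) : Q ∈ AddSubgroup.zmultiples P := by
  rcases point_cases Q with rfl | ⟨x, y, h, rfl, hxy⟩
  · exact zero_mem _
  simp only [Prod.mk.injEq] at hxy
  rcases hxy with ⟨rfl, rfl⟩ | ⟨rfl, rfl⟩ | ⟨rfl, rfl⟩
  · exact AddSubgroup.mem_zmultiples_iff.mpr ⟨2, by rw [two_zsmul, P_add_P]; rfl⟩
  · exact AddSubgroup.mem_zmultiples P
  · rw [← neg_P]
    exact neg_mem (AddSubgroup.mem_zmultiples P)

end E₁

/-- The elliptic curve `E₁ : y² = x³ + 4x` over `ℚ` has Mordell–Weil group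
isomorphic to `ℤ/4ℤ`, with nonzero points exactly `(0,0)` and `(2, ±4)`. -/
theorem stmt_12 :
    Nonempty (E₁.Point ≃+ ZMod 4) ∧
      ∀ P : E₁.Point, P = 0 ∨ ∃ (x y : ℚ) (h : E₁.Nonsingular x y), P = Point.some x y h ∧
        ((x, y) = (0, 0) ∨ (x, y) = (2, 4) ∨ (x, y) = (2, -4)) := by
  have hcard : Nat.card E₁.Point = 4 := by
    rw [← addOrderOf_eq_card_of_forall_mem_zmultiples E₁.mem_zmultiples_P, E₁.addOrderOf_P]
  exact ⟨⟨(zmodAddEquivOfGenerator E₁.mem_zmultiples_P hcard).symm⟩, E₁.point_cases⟩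
end

section
/- Let E/K be an elliptic curve over a number field K given by y² = x(x + u⁴)(x + v⁴) where u, v, w ∈ O_K satisfy u² + v² = w². Then the point P = (uv(u+w)(v+w), uvw(u+v)(v+w)(u+w)) lies on E(K) and satisfies 4P = (0, 0); in particular P has order 8 whenever it is nonzero and (0,0) has order 2. -/
/-!
On `y² = x (x + s²) (x + t²)` the point `(st, st(s + t))` has tangent slope `s + t`, and the
tangent meets the curve again at `(0, 0)`, so it doubles to the 2-torsion point `(0, 0)`.
For a Pythagorean triple take `s = a²`, `t = b²`, `s + t = c²`: the tangent at
`P = (ab(a+c)(b+c), abc(a+b)(b+c)(a+c))` has slope `ab + ac + bc` and `2P = (a²b², a²b²c²)`.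
Hence `4P = (0, 0) ≠ 0`, which forces the orders 8 and 2. The discriminant
`16 a⁸ b⁸ (a⁴ - b⁴)²` is nonzero, so every affine point of the curve is nonsingular.
-/

open WeierstrassCurve WeierstrassCurve.Affine NumberField

lemma addOrderOf_eq_prime_pow_of_nsmul_eq {G : Type*} [AddMonoid G] {p n : ℕ} [Fact p.Prime]
    {x t : G} (hx : p ^ n • x = t) (ht : t ≠ 0) (hpt : p • t = 0) :
    addOrderOf x = p ^ (n + 1) :=
  addOrderOf_eq_prime_pow (hx ▸ ht) (by rw [pow_succ, mul_nsmul, hx, hpt])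

lemma pythagorean_point_equation {R : Type*} [CommRing R] {a b c : R}
    (hpyth : a ^ 2 + b ^ 2 = c ^ 2) :
    (a * b * c * (a + b) * (b + c) * (a + c)) ^ 2 = a * b * (a + c) * (b + c) *
      (a * b * (a + c) * (b + c) + a ^ 4) * (a * b * (a + c) * (b + c) + b ^ 4) := by
  linear_combination (-(a^2*b^4*c^4) + -2*(a^2*b^5*c^3) + -(a^2*b^6*c^2) + -(a^3*b^3*c^4)
    + -3*(a^3*b^4*c^3) + -4*(a^3*b^5*c^2) + -2*(a^3*b^6*c) + -(a^4*b^2*c^4)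
    + -3*(a^4*b^3*c^3) + -3*(a^4*b^4*c^2) + -2*(a^4*b^5*c) + -(a^4*b^6)
    + -2*(a^5*b^2*c^3) + -4*(a^5*b^3*c^2) + -2*(a^5*b^4*c) + -(a^6*b^2*c^2)
    + -2*(a^6*b^3*c) + -(a^6*b^4)) * hpyth

lemma pythagorean_point_y_ne_zero {R : Type*} [CommRing R] [IsDomain R] {a b c : R}
    (hpyth : a ^ 2 + b ^ 2 = c ^ 2) (hsm : a * b * c * (a ^ 2 - b ^ 2) ≠ 0) :
    a * b * c * (a + b) * (b + c) * (a + c) ≠ 0 := by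
  have ha : a ≠ 0 := left_ne_zero_of_mul (left_ne_zero_of_mul (left_ne_zero_of_mul hsm))
  have hb : b ≠ 0 := right_ne_zero_of_mul (left_ne_zero_of_mul (left_ne_zero_of_mul hsm))
  have hapb : a + b ≠ 0 := fun h => hsm (by linear_combination a * b * c * (a - b) * h)
  have hbc : b + c ≠ 0 := fun h => ha (pow_eq_zero_iff two_ne_zero |>.mp
    (by linear_combination hpyth + (c - b) * h))
  have hac : a + c ≠ 0 := fun h => hb (pow_eq_zero_iff two_ne_zero |>.mp
    (by linear_combination hpyth + (c - a) * h))
  exact mul_ne_zero (mul_ne_zero (mul_ne_zero (left_ne_zero_of_mul hsm) hapb) hbc) hac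

namespace WeierstrassCurve.Affine

variable {F : Type*} [Field F]

/-- The curve `y² = x (x + A) (x + B)`. -/
def fullTwoTorsionModel (A B : F) : Affine F :=
  { a₁ := 0, a₂ := A + B, a₃ := 0, a₄ := A * B, a₆ := 0 }

variable {A B : F}

lemma fullTwoTorsionModel_Δ : (fullTwoTorsionModel A B).Δ = 16 * (A * B * (A - B)) ^ 2 := by
  simp only [fullTwoTorsionModel, Δ, b₂, b₄, b₆, b₈]
  ring

lemma fullTwoTorsionModel_nonsingular_iff [NeZero (2 : F)] (hA : A ≠ 0) (hB : B ≠ 0)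
    (hAB : A ≠ B) {x y : F} :
    (fullTwoTorsionModel A B).Nonsingular x y ↔ y ^ 2 = x * (x + A) * (x + B) := by
  have hΔ : (fullTwoTorsionModel A B).Δ ≠ 0 := by
    rw [fullTwoTorsionModel_Δ]
    have h16 : (16 : F) = 2 ^ 4 := by norm_num
    rw [h16]
    exact mul_ne_zero (pow_ne_zero _ two_ne_zero)
      (pow_ne_zero _ (mul_ne_zero (mul_ne_zero hA hB) (sub_ne_zero.mpr hAB)))
  rw [← equation_iff_nonsingular_of_Δ_ne_zero hΔ, equation_iff]
  simp only [fullTwoTorsionModel]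
  constructor <;> intro h <;> linear_combination h

lemma fullTwoTorsionModel_negY (x y : F) : (fullTwoTorsionModel A B).negY x y = -y := by
  simp [negY, fullTwoTorsionModel]

variable [DecidableEq F]

lemma Point.some_add_self_eq {W : Affine F} {x₁ y₁ x₂ y₂ ℓ : F} (h₁ : W.Nonsingular x₁ y₁)
    (h₂ : W.Nonsingular x₂ y₂) (hy : y₁ ≠ W.negY x₁ y₁) (hℓ : W.slope x₁ x₁ y₁ y₁ = ℓ)
    (hx₂ : W.addX x₁ x₁ ℓ = x₂) (hy₂ : W.addY x₁ x₁ y₁ ℓ = y₂) :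
    Point.some _ _ h₁ + Point.some _ _ h₁ = Point.some _ _ h₂ := by
  rw [Point.add_self_of_Y_ne hy]
  subst hℓ hx₂ hy₂
  rfl

lemma fullTwoTorsionModel_two_nsmul_some [NeZero (2 : F)] {x₁ y₁ x₂ y₂ ℓ : F}
    (h₁ : (fullTwoTorsionModel A B).Nonsingular x₁ y₁)
    (h₂ : (fullTwoTorsionModel A B).Nonsingular x₂ y₂) (hy₁ : y₁ ≠ 0)
    (hℓ : ℓ * (2 * y₁) = 3 * x₁ ^ 2 + 2 * (A + B) * x₁ + A * B)
    (hx₂ : x₂ = ℓ ^ 2 - (A + B) - 2 * x₁) (hy₂ : y₂ = ℓ * (x₁ - x₂) - y₁) :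
    2 • Point.some _ _ h₁ = Point.some _ _ h₂ := by
  have hy : y₁ - (fullTwoTorsionModel A B).negY x₁ y₁ ≠ 0 := by
    rw [fullTwoTorsionModel_negY, sub_neg_eq_add, ← two_mul]
    exact mul_ne_zero two_ne_zero hy₁
  rw [two_nsmul]
  refine Point.some_add_self_eq (ℓ := ℓ) h₁ h₂ (sub_ne_zero.mp hy) ?_ ?_ ?_
  · rw [slope_of_Y_ne rfl (sub_ne_zero.mp hy), div_eq_iff hy]
    simp only [negY, fullTwoTorsionModel]
    linear_combination -hℓ
  · simp only [addX, fullTwoTorsionModel]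
    linear_combination -hx₂
  · simp only [addY, addX, negAddY, negY, fullTwoTorsionModel]
    linear_combination -hy₂ + ℓ * hx₂

lemma fullTwoTorsionModel_two_nsmul_some_mul [NeZero (2 : F)] {s t r : F} (hs : s ^ 2 = A)
    (ht : t ^ 2 = B) (hr : s + t = r) (hstr : s * t * r ≠ 0)
    (hQ : (fullTwoTorsionModel A B).Nonsingular (s * t) (s * t * r))
    (hT : (fullTwoTorsionModel A B).Nonsingular 0 0) :
    2 • Point.some _ _ hQ = Point.some _ _ hT := by
  subst hs ht hr
  refine fullTwoTorsionModel_two_nsmul_some hQ hT hstr (ℓ := s + t) ?_ ?_ ?_ <;> ring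

lemma fullTwoTorsionModel_two_nsmul_some_pythagorean [NeZero (2 : F)] {a b c : F}
    (hpyth : a ^ 2 + b ^ 2 = c ^ 2) (hy : a * b * c * (a + b) * (b + c) * (a + c) ≠ 0)
    (hP : (fullTwoTorsionModel (a ^ 4) (b ^ 4)).Nonsingular
      (a * b * (a + c) * (b + c)) (a * b * c * (a + b) * (b + c) * (a + c)))
    (hQ : (fullTwoTorsionModel (a ^ 4) (b ^ 4)).Nonsingular
      (a ^ 2 * b ^ 2) (a ^ 2 * b ^ 2 * c ^ 2)) :
    2 • Point.some _ _ hP = Point.some _ _ hQ := by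
  refine fullTwoTorsionModel_two_nsmul_some hP hQ hy (ℓ := a * b + a * c + b * c) ?_ ?_ ?_
  · linear_combination -(2*(a*b^3*c^2) + 2*(a*b^4*c) + (a^2*b^2*c^2) + 2*(a^2*b^3*c)
      + 2*(a^2*b^4) + 2*(a^3*b*c^2) + 2*(a^3*b^2*c) + 2*(a^4*b*c) + 2*(a^4*b^2)) * hpyth
  · linear_combination (b^2 + a^2) * hpyth
  · ring

theorem fullTwoTorsionModel_pythagorean [NeZero (2 : F)] {a b c : F}
    (hpyth : a ^ 2 + b ^ 2 = c ^ 2) (hsm : a * b * c * (a ^ 2 - b ^ 2) ≠ 0) :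
    ∃ (hP : (fullTwoTorsionModel (a ^ 4) (b ^ 4)).Nonsingular
        (a * b * (a + c) * (b + c)) (a * b * c * (a + b) * (b + c) * (a + c)))
      (h0 : (fullTwoTorsionModel (a ^ 4) (b ^ 4)).Nonsingular 0 0),
      4 • Point.some _ _ hP = Point.some _ _ h0 ∧
        addOrderOf (Point.some _ _ hP) = 8 ∧ addOrderOf (Point.some _ _ h0) = 2 := by
  have ha : a ≠ 0 := left_ne_zero_of_mul (left_ne_zero_of_mul (left_ne_zero_of_mul hsm))
  have hb : b ≠ 0 := right_ne_zero_of_mul (left_ne_zero_of_mul (left_ne_zero_of_mul hsm))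
  have hc : c ≠ 0 := right_ne_zero_of_mul (left_ne_zero_of_mul hsm)
  have hab : a ^ 2 - b ^ 2 ≠ 0 := right_ne_zero_of_mul hsm
  have hA : a ^ 4 ≠ 0 := pow_ne_zero 4 ha
  have hB : b ^ 4 ≠ 0 := pow_ne_zero 4 hb
  have hAB : a ^ 4 ≠ b ^ 4 := fun h => mul_ne_zero hab (pow_ne_zero 2 hc)
    (by linear_combination h - (a ^ 2 - b ^ 2) * hpyth)
  have hP : (fullTwoTorsionModel (a ^ 4) (b ^ 4)).Nonsingular
      (a * b * (a + c) * (b + c)) (a * b * c * (a + b) * (b + c) * (a + c)) :=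
    (fullTwoTorsionModel_nonsingular_iff hA hB hAB).mpr (pythagorean_point_equation hpyth)
  have hQ : (fullTwoTorsionModel (a ^ 4) (b ^ 4)).Nonsingular
      (a ^ 2 * b ^ 2) (a ^ 2 * b ^ 2 * c ^ 2) :=
    (fullTwoTorsionModel_nonsingular_iff hA hB hAB).mpr <| by
      linear_combination (-(a^4*b^4*c^2) - a^4*b^6 - a^6*b^4) * hpyth
  have hT : (fullTwoTorsionModel (a ^ 4) (b ^ 4)).Nonsingular 0 0 :=
    (fullTwoTorsionModel_nonsingular_iff hA hB hAB).mpr <| by ring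
  have hPQ := fullTwoTorsionModel_two_nsmul_some_pythagorean hpyth
    (pythagorean_point_y_ne_zero hpyth hsm) hP hQ
  have hQT := fullTwoTorsionModel_two_nsmul_some_mul (by ring) (by ring) hpyth
    (by simp [ha, hb, hc]) hQ hT
  have h4 : 2 ^ 2 • Point.some _ _ hP = Point.some _ _ hT := by
    rw [pow_two, mul_nsmul, hPQ, hQT]
  have hT2 : 2 • Point.some _ _ hT = 0 := by
    rw [two_nsmul, Point.add_self_of_Y_eq (by rw [fullTwoTorsionModel_negY, neg_zero])]
  exact ⟨hP, hT, h4, addOrderOf_eq_prime_pow_of_nsmul_eq h4 (Point.some_ne_zero hT) hT2,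
    addOrderOf_eq_prime hT2 (Point.some_ne_zero hT)⟩

end WeierstrassCurve.Affine

open Classical in
/-- Let `E/K` be the elliptic curve `y² = x(x + u⁴)(x + v⁴)` over a number
field `K`, where `u, v, w ∈ 𝓞 K` satisfy `u² + v² = w²` (and `uvw(u² − v²) ≠ 0`). Then
`P = (uv(u+w)(v+w), uvw(u+v)(v+w)(u+w))` lies on `E(K)` and satisfies `4P = (0, 0)`;
in particular `P` has order 8 and `(0,0)` has order 2. -/
theorem stmt_19 (K : Type*) [Field K] [NumberField K] (u v w : 𝓞 K)
    (hpyth : u ^ 2 + v ^ 2 = w ^ 2) (hsm : u * v * w * (u ^ 2 - v ^ 2) ≠ 0)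
    (W : Affine K)
    (hW : W = { a₁ := 0, a₂ := algebraMap (𝓞 K) K (u ^ 4 + v ^ 4), a₃ := 0,
                a₄ := algebraMap (𝓞 K) K (u ^ 4 * v ^ 4), a₆ := 0 }) :
    ∃ (hP : W.Nonsingular (algebraMap (𝓞 K) K (u * v * (u + w) * (v + w)))
        (algebraMap (𝓞 K) K (u * v * w * (u + v) * (v + w) * (u + w))))
      (h0 : W.Nonsingular 0 0),
      4 • (Point.some _ _ hP) = Point.some _ _ h0 ∧
        addOrderOf (Point.some _ _ hP : W.Point) = 8 ∧
        addOrderOf (Point.some _ _ h0 : W.Point) = 2 := by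
  subst hW
  have hinj : Function.Injective (algebraMap (𝓞 K) K) := FaithfulSMul.algebraMap_injective _ _
  have key := fullTwoTorsionModel_pythagorean (a := algebraMap (𝓞 K) K u)
    (b := algebraMap (𝓞 K) K v) (c := algebraMap (𝓞 K) K w)
    (by simpa only [map_add, map_pow] using congrArg (algebraMap (𝓞 K) K) hpyth)
    (by simpa only [map_mul, map_sub, map_pow] using (map_ne_zero_iff _ hinj).mpr hsm)
  simp only [map_mul, map_add, map_pow]
  exact key
end
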